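/- arXiv:2208.12009 — 6 statements merged into one kernel-verified Lean document; each statement's English description precedes it below -/
import Mathlib

section
/- Let 𝔤 be a finite-dimensional real Lie algebra, U ⊆ ℝ³ open, and let A : U → (Fin 3 → 𝔤) and q : U → 𝔤 be continuously differentiable. Set B := curl A + (1/2) • ⋆[A,A]. Then on U: curl([A,q]) + ⋆[A, grad q + [A,q]] = [B, q]. -/
open scoped BigOperators

/-- The Levi-Civita symbol on three indices (totally antisymmetric, `ε 0 1 2 = 1`). -/
noncomputable def levicivita (i j k : Fin 3) : ℝ :=
  (((j : ℕ) : ℝ) - ((i : ℕ) : ℝ)) * (((k : ℕ) : ℝ) - ((j : ℕ) : ℝ)) *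
    (((k : ℕ) : ℝ) - ((i : ℕ) : ℝ)) / 2

/-- The partial derivative `∂_μ f` on `ℝ³`. -/
noncomputable def pderiv3 {E : Type*} [NormedAddCommGroup E] [NormedSpace ℝ E]
    (μ : Fin 3) (f : EuclideanSpace ℝ (Fin 3) → E) (x : EuclideanSpace ℝ (Fin 3)) : E :=
  fderiv ℝ f x (EuclideanSpace.single μ 1)

/-- The gradient of a `𝔤`-valued function on `ℝ³`. -/
noncomputable def grad3 {𝔤 : Type*} [NormedAddCommGroup 𝔤] [NormedSpace ℝ 𝔤]
    (q : EuclideanSpace ℝ (Fin 3) → 𝔤) (x : EuclideanSpace ℝ (Fin 3)) : Fin 3 → 𝔤 :=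
  fun μ => pderiv3 μ q x

/-- The curl of a `𝔤`-valued vector field on `ℝ³`:
`(curl A)(α) = Σ_{μ,ν} ε(α,μ,ν) • ∂_μ A(ν)`. -/
noncomputable def curl3 {𝔤 : Type*} [NormedAddCommGroup 𝔤] [NormedSpace ℝ 𝔤]
    (A : EuclideanSpace ℝ (Fin 3) → Fin 3 → 𝔤) (x : EuclideanSpace ℝ (Fin 3)) :
    Fin 3 → 𝔤 :=
  fun α => ∑ μ : Fin 3, ∑ ν : Fin 3, levicivita α μ ν • pderiv3 μ (fun y => A y ν) x

/-- The divergence of a `𝔤`-valued vector field on `ℝ³`: `div A = Σ_μ ∂_μ A(μ)`. -/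
noncomputable def div3 {𝔤 : Type*} [NormedAddCommGroup 𝔤] [NormedSpace ℝ 𝔤]
    (A : EuclideanSpace ℝ (Fin 3) → Fin 3 → 𝔤) (x : EuclideanSpace ℝ (Fin 3)) : 𝔤 :=
  ∑ μ : Fin 3, pderiv3 μ (fun y => A y μ) x

/-- The cross-bracket `⋆[v,w](α) = Σ_{μ,ν} ε(α,μ,ν) • ⁅v(μ), w(ν)⁆`, where the Lie
bracket of `𝔤` is the continuous bilinear map `br`. -/
noncomputable def crossBr {𝔤 : Type*} [NormedAddCommGroup 𝔤] [NormedSpace ℝ 𝔤]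
    (br : 𝔤 →L[ℝ] 𝔤 →L[ℝ] 𝔤) (v w : Fin 3 → 𝔤) : Fin 3 → 𝔤 :=
  fun α => ∑ μ : Fin 3, ∑ ν : Fin 3, levicivita α μ ν • br (v μ) (w ν)

/-- The dot-bracket `⋆[v,⋆w] = Σ_α ⁅v(α), w(α)⁆`, where the Lie bracket of `𝔤` is the
continuous bilinear map `br`. -/
noncomputable def dotBr {𝔤 : Type*} [NormedAddCommGroup 𝔤] [NormedSpace ℝ 𝔤]
    (br : 𝔤 →L[ℝ] 𝔤 →L[ℝ] 𝔤) (v w : Fin 3 → 𝔤) : 𝔤 :=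
  ∑ α : Fin 3, br (v α) (w α)

/-! By the Leibniz rule, `curl [A, q] = [curl A, q] - ⋆[A, grad q]`, the sign coming from
transposing the two indices of `ε`, so the gradient terms cancel. What remains,
`⋆[A, [A, q]] = ½ [⋆[A, A], q]`, follows from the Jacobi identity in the form
`[[a, b], c] = [a, [b, c]] - [b, [a, c]]` together with the antisymmetry of `ε`. -/

theorem pderiv3_of_bilinear {E F G : Type*} [NormedAddCommGroup E] [NormedSpace ℝ E]
    [NormedAddCommGroup F] [NormedSpace ℝ F] [NormedAddCommGroup G] [NormedSpace ℝ G]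
    (b : E →L[ℝ] F →L[ℝ] G) {f : EuclideanSpace ℝ (Fin 3) → E}
    {g : EuclideanSpace ℝ (Fin 3) → F} {x : EuclideanSpace ℝ (Fin 3)}
    (hf : DifferentiableAt ℝ f x) (hg : DifferentiableAt ℝ g x) (μ : Fin 3) :
    pderiv3 μ (fun y => b (f y) (g y)) x = b (pderiv3 μ f x) (g x) + b (f x) (pderiv3 μ g x) := by
  rw [pderiv3, b.fderiv_of_bilinear hf hg, add_comm]
  rfl

theorem levicivita_swap (α μ ν : Fin 3) : levicivita α ν μ = -levicivita α μ ν := by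
  unfold levicivita
  ring

theorem sum_levicivita_smul_swap {M : Type*} [AddCommGroup M] [Module ℝ M]
    (f : Fin 3 → Fin 3 → M) (α : Fin 3) :
    ∑ μ, ∑ ν, levicivita α μ ν • f ν μ = -∑ μ, ∑ ν, levicivita α μ ν • f μ ν := by
  rw [Finset.sum_comm, ← Finset.sum_neg_distrib]
  refine Finset.sum_congr rfl fun μ _ => ?_
  rw [← Finset.sum_neg_distrib]
  refine Finset.sum_congr rfl fun ν _ => ?_
  rw [levicivita_swap, neg_smul]

section LieBracket

variable {𝔤 : Type*} [NormedAddCommGroup 𝔤] [NormedSpace ℝ 𝔤] (br : 𝔤 →L[ℝ] 𝔤 →L[ℝ] 𝔤)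

theorem br_skew (br_alt : ∀ a : 𝔤, br a a = 0) (a b : 𝔤) : br b a = -br a b := by
  have h := br_alt (a + b)
  simp only [map_add, add_apply, br_alt, zero_add, add_zero] at h
  exact eq_neg_of_add_eq_zero_left h

theorem br_br_left (br_alt : ∀ a : 𝔤, br a a = 0)
    (br_jacobi : ∀ a b c : 𝔤, br a (br b c) + br b (br c a) + br c (br a b) = 0) (a b c : 𝔤) :
    br (br a b) c = br a (br b c) - br b (br a c) := by
  have h := br_jacobi a b c
  rw [br_skew br br_alt a c, map_neg, br_skew br br_alt (br a b) c] at h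
  rw [← sub_eq_zero, ← neg_eq_zero, ← h]
  abel

theorem crossBr_add_right (v w w' : Fin 3 → 𝔤) :
    crossBr br v (w + w') = crossBr br v w + crossBr br v w' := by
  ext α
  simp only [crossBr, Pi.add_apply, map_add, smul_add, Finset.sum_add_distrib]

theorem crossBr_br_right_self (br_alt : ∀ a : 𝔤, br a a = 0)
    (br_jacobi : ∀ a b c : 𝔤, br a (br b c) + br b (br c a) + br c (br a b) = 0)
    (v : Fin 3 → 𝔤) (c : 𝔤) (α : Fin 3) :
    crossBr br v (fun μ => br (v μ) c) α = (1 / 2 : ℝ) • br (crossBr br v v α) c := by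
  have h := sum_levicivita_smul_swap (fun μ ν => br (v μ) (br (v ν) c)) α
  simp only [crossBr, map_sum, map_smul, sum_apply, smul_apply,
    br_br_left br br_alt br_jacobi, smul_sub, Finset.sum_sub_distrib, h]
  module

theorem curl3_br_right {A : EuclideanSpace ℝ (Fin 3) → Fin 3 → 𝔤}
    {q : EuclideanSpace ℝ (Fin 3) → 𝔤} {x : EuclideanSpace ℝ (Fin 3)}
    (hA : DifferentiableAt ℝ A x) (hq : DifferentiableAt ℝ q x) (α : Fin 3) :
    curl3 (fun y β => br (A y β) (q y)) x α
      = br (curl3 A x α) (q x) - crossBr br (A x) (grad3 q x) α := by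
  have hAν (ν : Fin 3) : DifferentiableAt ℝ (fun y => A y ν) x := differentiableAt_pi.1 hA ν
  have h := sum_levicivita_smul_swap (fun μ ν => br (A x μ) (pderiv3 ν q x)) α
  simp only [curl3, crossBr, grad3, pderiv3_of_bilinear br (hAν _) hq, smul_add,
    Finset.sum_add_distrib, map_sum, map_smul, sum_apply, smul_apply] at h ⊢
  rw [h]
  abel

end LieBracket

theorem curl_bracket_add_cross_general {𝔤 : Type*} [NormedAddCommGroup 𝔤] [NormedSpace ℝ 𝔤]
    (br : 𝔤 →L[ℝ] 𝔤 →L[ℝ] 𝔤)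
    (br_alt : ∀ a : 𝔤, br a a = 0)
    (br_jacobi : ∀ a b c : 𝔤, br a (br b c) + br b (br c a) + br c (br a b) = 0)
    (U : Set (EuclideanSpace ℝ (Fin 3))) (hU : IsOpen U)
    (A : EuclideanSpace ℝ (Fin 3) → Fin 3 → 𝔤) (q : EuclideanSpace ℝ (Fin 3) → 𝔤)
    (hA : ContDiffOn ℝ 1 A U) (hq : ContDiffOn ℝ 1 q U)
    (B : EuclideanSpace ℝ (Fin 3) → Fin 3 → 𝔤)
    (hB : B = fun y α => curl3 A y α + (1/2 : ℝ) • crossBr br (A y) (A y) α) :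
    ∀ x ∈ U, ∀ α : Fin 3,
      curl3 (fun y β => br (A y β) (q y)) x α
          + crossBr br (A x) (fun μ => grad3 q x μ + br (A x μ) (q x)) α
        = br (B x α) (q x) := by
  intro x hx α
  have hAx : DifferentiableAt ℝ A x :=
    (hA.contDiffAt (hU.mem_nhds hx)).differentiableAt one_ne_zero
  have hqx : DifferentiableAt ℝ q x :=
    (hq.contDiffAt (hU.mem_nhds hx)).differentiableAt one_ne_zero
  have hsplit : (fun μ => grad3 q x μ + br (A x μ) (q x))
      = grad3 q x + fun μ => br (A x μ) (q x) := rfl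
  rw [curl3_br_right br hAx hqx, hsplit, crossBr_add_right, Pi.add_apply,
    crossBr_br_right_self br br_alt br_jacobi, hB]
  simp only [map_add, map_smul, add_apply, smul_apply]
  abel

/-- setting `B := curl A + (1/2) • ⋆[A,A]`, one has
`curl([A,q]) + ⋆[A, grad q + [A,q]] = [B, q]` on `U`. -/
theorem curl_bracket_add_cross {𝔤 : Type*} [NormedAddCommGroup 𝔤] [NormedSpace ℝ 𝔤]
    [FiniteDimensional ℝ 𝔤]
    (br : 𝔤 →L[ℝ] 𝔤 →L[ℝ] 𝔤)
    (br_alt : ∀ a : 𝔤, br a a = 0)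
    (br_jacobi : ∀ a b c : 𝔤, br a (br b c) + br b (br c a) + br c (br a b) = 0)
    (U : Set (EuclideanSpace ℝ (Fin 3))) (hU : IsOpen U)
    (A : EuclideanSpace ℝ (Fin 3) → Fin 3 → 𝔤) (q : EuclideanSpace ℝ (Fin 3) → 𝔤)
    (hA : ContDiffOn ℝ 1 A U) (hq : ContDiffOn ℝ 1 q U)
    (B : EuclideanSpace ℝ (Fin 3) → Fin 3 → 𝔤)
    (hB : B = fun y α => curl3 A y α + (1/2 : ℝ) • crossBr br (A y) (A y) α) :
    ∀ x ∈ U, ∀ α : Fin 3,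
      curl3 (fun y β => br (A y β) (q y)) x α
          + crossBr br (A x) (fun μ => grad3 q x μ + br (A x μ) (q x)) α
        = br (B x α) (q x) :=
  curl_bracket_add_cross_general br br_alt br_jacobi U hU A q hA hq B hB
end

section
/- Let 𝔤 be a finite-dimensional real Lie algebra, U ⊆ ℝ³ open, and let A, B : U → (Fin 3 → 𝔤) be continuously differentiable. Then the Leibniz-type identity div(⋆[A,B]) = ⋆[curl A, ⋆B] − ⋆[A, ⋆(curl B)] holds on U. -/
open scoped BigOperators

/-! By the Leibniz rule, `∂_μ ⋆[A,B](μ) = Σ ε(μ,ν,ρ) (⁅∂_μ A(ν), B(ρ)⁆ + ⁅A(ν), ∂_μ B(ρ)⁆)`.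
Summed over `μ`, cyclic invariance of `ε` turns the first part into `⋆[curl A, ⋆B]`, and
antisymmetry of `ε` in its first two slots turns the second into `-⋆[A, ⋆(curl B)]`. -/

open Finset

lemma levicivita_cyclic (i j k : Fin 3) : levicivita i j k = levicivita j k i := by
  unfold levicivita; ring

lemma levicivita_swap_s8 (i j k : Fin 3) : levicivita j i k = -levicivita i j k := by
  unfold levicivita; ring

section Pderiv

variable {E F G : Type*} [NormedAddCommGroup E] [NormedSpace ℝ E]
  [NormedAddCommGroup F] [NormedSpace ℝ F] [NormedAddCommGroup G] [NormedSpace ℝ G]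
  {x : EuclideanSpace ℝ (Fin 3)}

lemma pderiv3_const_smul (μ : Fin 3) (c : ℝ) {f : EuclideanSpace ℝ (Fin 3) → E}
    (hf : DifferentiableAt ℝ f x) :
    pderiv3 μ (fun y => c • f y) x = c • pderiv3 μ f x := by
  simp [pderiv3, fderiv_fun_const_smul hf]

lemma pderiv3_sum {ι : Type*} (μ : Fin 3) (s : Finset ι)
    {f : ι → EuclideanSpace ℝ (Fin 3) → E} (hf : ∀ i ∈ s, DifferentiableAt ℝ (f i) x) :
    pderiv3 μ (fun y => ∑ i ∈ s, f i y) x = ∑ i ∈ s, pderiv3 μ (f i) x := by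
  simp [pderiv3, fderiv_fun_sum hf]

lemma pderiv3_bilinear (μ : Fin 3) (br : E →L[ℝ] F →L[ℝ] G)
    {f : EuclideanSpace ℝ (Fin 3) → E} {g : EuclideanSpace ℝ (Fin 3) → F}
    (hf : DifferentiableAt ℝ f x) (hg : DifferentiableAt ℝ g x) :
    pderiv3 μ (fun y => br (f y) (g y)) x
      = br (pderiv3 μ f x) (g x) + br (f x) (pderiv3 μ g x) := by
  simp [pderiv3, br.fderiv_of_bilinear hf hg, add_comm]

end Pderiv

section CrossBracket

variable {𝔤 : Type*} [NormedAddCommGroup 𝔤] [NormedSpace ℝ 𝔤] (br : 𝔤 →L[ℝ] 𝔤 →L[ℝ] 𝔤)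

lemma pderiv3_crossBr (μ α : Fin 3) {A B : EuclideanSpace ℝ (Fin 3) → Fin 3 → 𝔤}
    {x : EuclideanSpace ℝ (Fin 3)} (hA : ∀ ν, DifferentiableAt ℝ (fun y => A y ν) x)
    (hB : ∀ ν, DifferentiableAt ℝ (fun y => B y ν) x) :
    pderiv3 μ (fun y => crossBr br (A y) (B y) α) x
      = crossBr br (fun ν => pderiv3 μ (fun y => A y ν) x) (B x) α
        + crossBr br (A x) (fun ν => pderiv3 μ (fun y => B y ν) x) α := by
  have hbr : ∀ ν ρ, DifferentiableAt ℝ (fun y => br (A y ν) (B y ρ)) x := fun ν ρ =>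
    (br.hasFDerivAt_of_bilinear (hA ν).hasFDerivAt (hB ρ).hasFDerivAt).differentiableAt
  simp only [crossBr, ← sum_add_distrib, ← smul_add]
  rw [pderiv3_sum (f := fun ν y => ∑ ρ, levicivita α ν ρ • br (A y ν) (B y ρ)) _ _
    fun ν _ => .fun_sum fun ρ _ => (hbr ν ρ).const_smul _]
  refine sum_congr rfl fun ν _ => ?_
  rw [pderiv3_sum (f := fun ρ y => levicivita α ν ρ • br (A y ν) (B y ρ)) _ _
    fun ρ _ => (hbr ν ρ).const_smul _]
  refine sum_congr rfl fun ρ _ => ?_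
  rw [pderiv3_const_smul _ _ (hbr ν ρ), pderiv3_bilinear _ _ (hA ν) (hB ρ)]

lemma sum_crossBr_left (a : Fin 3 → Fin 3 → 𝔤) (w : Fin 3 → 𝔤) :
    ∑ μ, crossBr br (a μ) w μ
      = dotBr br (fun ρ => ∑ μ, ∑ ν, levicivita ρ μ ν • a μ ν) w := by
  simp only [crossBr, dotBr, map_sum, map_smul, _root_.sum_apply, _root_.smul_apply]
  conv_rhs => rw [sum_comm]; enter [2, μ]; rw [sum_comm]
  refine sum_congr rfl fun μ _ => sum_congr rfl fun ν _ => sum_congr rfl fun ρ _ => ?_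
  rw [levicivita_cyclic ρ]

lemma sum_crossBr_right (v : Fin 3 → 𝔤) (b : Fin 3 → Fin 3 → 𝔤) :
    ∑ μ, crossBr br v (b μ) μ
      = -dotBr br v (fun ν => ∑ μ, ∑ ρ, levicivita ν μ ρ • b μ ρ) := by
  simp only [crossBr, dotBr, map_sum, map_smul, ← sum_neg_distrib]
  rw [sum_comm]
  refine sum_congr rfl fun ν _ => sum_congr rfl fun μ _ => sum_congr rfl fun ρ _ => ?_
  rw [levicivita_swap_s8, neg_smul]

end CrossBracket

theorem div_crossBr_general {𝔤 : Type*} [NormedAddCommGroup 𝔤] [NormedSpace ℝ 𝔤]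
    (br : 𝔤 →L[ℝ] 𝔤 →L[ℝ] 𝔤)
    (U : Set (EuclideanSpace ℝ (Fin 3))) (hU : IsOpen U)
    (A B : EuclideanSpace ℝ (Fin 3) → Fin 3 → 𝔤)
    (hA : ContDiffOn ℝ 1 A U) (hB : ContDiffOn ℝ 1 B U) :
    ∀ x ∈ U,
      div3 (fun y => crossBr br (A y) (B y)) x
        = dotBr br (curl3 A x) (B x) - dotBr br (A x) (curl3 B x) := by
  intro x hx
  have hdiff : ∀ {C : EuclideanSpace ℝ (Fin 3) → Fin 3 → 𝔤}, ContDiffOn ℝ 1 C U →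
      ∀ ν, DifferentiableAt ℝ (fun y => C y ν) x := fun hC =>
    differentiableAt_pi.mp ((hC.differentiableOn one_ne_zero).differentiableAt (hU.mem_nhds hx))
  calc div3 (fun y => crossBr br (A y) (B y)) x
      = ∑ μ, crossBr br (fun ν => pderiv3 μ (fun y => A y ν) x) (B x) μ
          + ∑ μ, crossBr br (A x) (fun ν => pderiv3 μ (fun y => B y ν) x) μ := by
        rw [← sum_add_distrib]
        exact sum_congr rfl fun μ _ => pderiv3_crossBr br μ μ (hdiff hA) (hdiff hB)
    _ = dotBr br (curl3 A x) (B x) - dotBr br (A x) (curl3 B x) := by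
        rw [sum_crossBr_left, sum_crossBr_right, ← sub_eq_add_neg]
        rfl

/-- the Leibniz-type identity
`div(⋆[A,B]) = ⋆[curl A, ⋆B] − ⋆[A, ⋆(curl B)]` on `U`. -/
theorem div_crossBr {𝔤 : Type*} [NormedAddCommGroup 𝔤] [NormedSpace ℝ 𝔤]
    [FiniteDimensional ℝ 𝔤]
    (br : 𝔤 →L[ℝ] 𝔤 →L[ℝ] 𝔤)
    (br_alt : ∀ a : 𝔤, br a a = 0)
    (br_jacobi : ∀ a b c : 𝔤, br a (br b c) + br b (br c a) + br c (br a b) = 0)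
    (U : Set (EuclideanSpace ℝ (Fin 3))) (hU : IsOpen U)
    (A B : EuclideanSpace ℝ (Fin 3) → Fin 3 → 𝔤)
    (hA : ContDiffOn ℝ 1 A U) (hB : ContDiffOn ℝ 1 B U) :
    ∀ x ∈ U,
      div3 (fun y => crossBr br (A y) (B y)) x
        = dotBr br (curl3 A x) (B x) - dotBr br (A x) (curl3 B x) :=
  div_crossBr_general br U hU A B hA hB
end

section
/- Let 𝔤 be a finite-dimensional real Lie algebra, U ⊆ ℝ³ open, and let A, E : ℝ × U → (Fin 3 → 𝔤) be smooth and satisfy the Yang–Mills evolution equations in temporal gauge: ∂_t A = −E and ∂_t E = curl B + ⋆[A,B] on ℝ × U, where B(t,·) := curl A(t,·) + (1/2) • ⋆[A(t,·),A(t,·)] (spatial derivatives). Then for every x ∈ U the constraint quantity t ↦ (div E(t,·))(x) + ⋆[A(t,x), ⋆E(t,x)] is constant in t; in particular, if div E + ⋆[A,⋆E] = 0 holds at t = 0 then it holds for all t. -/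
open scoped BigOperators

/-!
Write `D·e = div e + ⋆[A,⋆e]` and `D×b = curl b + ⋆[A,b]`. Along the flow
`∂ₜ(D·E) = D·(∂ₜE) + ⋆[∂ₜA,⋆E] = D·(D×B) - ⋆[E,⋆E]`, and `⋆[E,⋆E] = 0`. Expanding `D·(D×B)`,
`div curl B` vanishes by the symmetry of second derivatives and the two `⋆[A,⋆curl B]` terms
cancel, leaving `⋆[curl A,⋆B] + ⋆[A,⋆⋆[A,B]]`. The Jacobi identity gives
`⋆[A,⋆⋆[A,B]] = ½ ⋆[⋆[A,A],⋆B]`, so with `curl A = B - ½ ⋆[A,A]` this is `⋆[B,⋆B] = 0`.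
-/

open scoped Topology

local notation "ℝ³" => EuclideanSpace ℝ (Fin 3)

lemma sum_levicivita_smul_eq_zero {M : Type*} [AddCommGroup M] [Module ℝ M]
    (Q : Fin 3 → Fin 3 → Fin 3 → M) (hQ : ∀ i j k, Q i j k = Q j i k) :
    ∑ i, ∑ j, ∑ k, levicivita i j k • Q i j k = 0 := by
  simp only [Fin.sum_univ_three, levicivita, hQ 1 0, hQ 2 0, hQ 2 1]
  norm_num
  module

section Bracket

variable {𝔤 : Type*} [NormedAddCommGroup 𝔤] [NormedSpace ℝ 𝔤] (br : 𝔤 →L[ℝ] 𝔤 →L[ℝ] 𝔤)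

lemma br_swap (br_alt : ∀ a, br a a = 0) (a b : 𝔤) : br b a = -br a b := by
  have h := br_alt (a + b)
  simp only [map_add, add_apply, br_alt] at h
  linear_combination (norm := module) h

lemma dotBr_neg_left (v w : Fin 3 → 𝔤) : dotBr br (-v) w = -dotBr br v w := by
  simp [dotBr]

lemma dotBr_self (br_alt : ∀ a, br a a = 0) (v : Fin 3 → 𝔤) : dotBr br v v = 0 := by
  simp [dotBr, br_alt]

lemma dotBr_crossBr_eq_half_smul_dotBr (br_alt : ∀ a, br a a = 0)
    (br_jacobi : ∀ a b c, br a (br b c) + br b (br c a) + br c (br a b) = 0)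
    (v c : Fin 3 → 𝔤) :
    dotBr br v (crossBr br v c) = (1 / 2 : ℝ) • dotBr br (crossBr br v v) c := by
  have jacobi : ∀ a b d, br a (br b d) - br b (br a d) = br (br a b) d := by
    intro a b d
    have h := br_jacobi a b d
    rw [br_swap br br_alt a d, map_neg] at h
    rw [br_swap br br_alt d (br a b)]
    linear_combination (norm := module) h
  simp only [dotBr, crossBr, Fin.sum_univ_three, levicivita, map_add, map_smul, add_apply,
    FunLike.coe_smul, Pi.smul_apply, br_swap br br_alt (v 0) (v 1), br_swap br br_alt (v 0) (v 2),
    br_swap br br_alt (v 1) (v 2), br_alt, map_neg]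
  norm_num
  linear_combination (norm := module)
    jacobi (v 0) (v 1) (c 2) + jacobi (v 1) (v 2) (c 0) - jacobi (v 0) (v 2) (c 1)

lemma dotBr_add_dotBr_crossBr_eq_zero (br_alt : ∀ a, br a a = 0)
    (br_jacobi : ∀ a b c, br a (br b c) + br b (br c a) + br c (br a b) = 0)
    (v c : Fin 3 → 𝔤) :
    dotBr br c (c + (1 / 2 : ℝ) • crossBr br v v)
      + dotBr br v (crossBr br v (c + (1 / 2 : ℝ) • crossBr br v v)) = 0 := by
  set b := c + (1 / 2 : ℝ) • crossBr br v v with hb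
  rw [dotBr_crossBr_eq_half_smul_dotBr br br_alt br_jacobi, ← dotBr_self br br_alt b]
  nth_rewrite 3 [hb]
  simp only [dotBr, Pi.add_apply, Pi.smul_apply, map_add, map_smul, add_apply, smul_apply,
    Finset.smul_sum, Finset.sum_add_distrib]

end Bracket

section SecondDerivatives

variable {H F : Type*} [NormedAddCommGroup H] [NormedSpace ℝ H] [NormedAddCommGroup F]
  [NormedSpace ℝ F] {f : H → F} {x : H}

lemma hasFDerivAt_fderiv_apply (hf : DifferentiableAt ℝ (fderiv ℝ f) x) (v : H) :
    HasFDerivAt (fun y => fderiv ℝ f y v) ((fderiv ℝ (fderiv ℝ f) x).flip v) x := by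
  simpa using hf.hasFDerivAt.clm_apply (hasFDerivAt_const v x)

lemma ContDiffAt.differentiableAt_fderiv (hf : ContDiffAt ℝ 2 f x) :
    DifferentiableAt ℝ (fderiv ℝ f) x :=
  (hf.fderiv_right (m := 1) le_rfl).differentiableAt one_ne_zero

lemma ContDiffAt.fderiv_fderiv_comm (hf : ContDiffAt ℝ 2 f x) (v w : H) :
    fderiv ℝ (fderiv ℝ f) x v w = fderiv ℝ (fderiv ℝ f) x w v :=
  hf.isSymmSndFDerivAt (by simp [minSmoothness_of_isRCLikeNormedField]) v w

end SecondDerivatives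

section PartialDerivatives

variable {F : Type*} [NormedAddCommGroup F] [NormedSpace ℝ F] {f g : ℝ³ → F} {x : ℝ³}

lemma HasFDerivAt.pderiv3_eq {f' : ℝ³ →L[ℝ] F} (h : HasFDerivAt f f' x) (μ : Fin 3) :
    pderiv3 μ f x = f' (EuclideanSpace.single μ 1) := by
  rw [pderiv3, h.fderiv]

lemma Filter.EventuallyEq.pderiv3_eq (h : f =ᶠ[𝓝 x] g) (μ : Fin 3) :
    pderiv3 μ f x = pderiv3 μ g x := by
  rw [pderiv3, pderiv3, h.fderiv_eq]

lemma pderiv3_add (hf : DifferentiableAt ℝ f x) (hg : DifferentiableAt ℝ g x) (μ : Fin 3) :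
    pderiv3 μ (fun y => f y + g y) x = pderiv3 μ f x + pderiv3 μ g x :=
  (hf.hasFDerivAt.add hg.hasFDerivAt).pderiv3_eq μ

lemma pderiv3_sum_sum_smul (c : Fin 3 → Fin 3 → ℝ) {f : Fin 3 → Fin 3 → ℝ³ → F}
    (hf : ∀ ρ ν, DifferentiableAt ℝ (f ρ ν) x) (μ : Fin 3) :
    pderiv3 μ (fun y => ∑ ρ, ∑ ν, c ρ ν • f ρ ν y) x
      = ∑ ρ, ∑ ν, c ρ ν • pderiv3 μ (f ρ ν) x := by
  have h : HasFDerivAt (fun y => ∑ ρ, ∑ ν, c ρ ν • f ρ ν y) _ x :=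
    HasFDerivAt.fun_sum fun ρ _ => HasFDerivAt.fun_sum fun ν _ =>
      (hf ρ ν).hasFDerivAt.const_smul (c ρ ν)
  rw [h.pderiv3_eq]
  simp only [sum_apply, smul_apply, pderiv3]

lemma pderiv3_br (br : F →L[ℝ] F →L[ℝ] F) (hf : DifferentiableAt ℝ f x)
    (hg : DifferentiableAt ℝ g x) (μ : Fin 3) :
    pderiv3 μ (fun y => br (f y) (g y)) x
      = br (pderiv3 μ f x) (g x) + br (f x) (pderiv3 μ g x) := by
  have h : HasFDerivAt (fun y => br (f y) (g y)) _ x :=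
    (br.hasFDerivAt.comp x hf.hasFDerivAt).clm_apply hg.hasFDerivAt
  rw [h.pderiv3_eq]
  simp only [pderiv3, add_apply, ContinuousLinearMap.comp_apply, ContinuousLinearMap.flip_apply,
    Function.comp_apply]
  abel

lemma ContDiffAt.pderiv3 {m n : WithTop ℕ∞} (hf : ContDiffAt ℝ n f x) (hmn : m + 1 ≤ n)
    (μ : Fin 3) : ContDiffAt ℝ m (pderiv3 μ f) x :=
  (hf.fderiv_right hmn).clm_apply contDiffAt_const

lemma pderiv3_pderiv3_comm (hf : ContDiffAt ℝ 2 f x) (μ ρ : Fin 3) :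
    pderiv3 μ (pderiv3 ρ f) x = pderiv3 ρ (pderiv3 μ f) x := by
  have h : ∀ ν, HasFDerivAt (pderiv3 ν f)
      ((fderiv ℝ (fderiv ℝ f) x).flip (EuclideanSpace.single ν 1)) x := fun ν =>
    hasFDerivAt_fderiv_apply hf.differentiableAt_fderiv _
  rw [(h ρ).pderiv3_eq, (h μ).pderiv3_eq]
  exact hf.fderiv_fderiv_comm _ _

end PartialDerivatives

section VectorCalculus

variable {𝔤 : Type*} [NormedAddCommGroup 𝔤] [NormedSpace ℝ 𝔤] (br : 𝔤 →L[ℝ] 𝔤 →L[ℝ] 𝔤)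
  {x : ℝ³}

lemma Filter.EventuallyEq.div3_eq {f g : ℝ³ → Fin 3 → 𝔤} (h : f =ᶠ[𝓝 x] g) :
    div3 f x = div3 g x :=
  Finset.sum_congr rfl fun μ _ => (h.fun_comp (· μ)).pderiv3_eq μ

lemma div3_add {f g : ℝ³ → Fin 3 → 𝔤} (hf : ∀ ν, DifferentiableAt ℝ (fun y => f y ν) x)
    (hg : ∀ ν, DifferentiableAt ℝ (fun y => g y ν) x) :
    div3 (fun y => f y + g y) x = div3 f x + div3 g x := by
  simp only [div3, Pi.add_apply, pderiv3_add (hf _) (hg _), Finset.sum_add_distrib]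

lemma div3_curl3 {f : ℝ³ → Fin 3 → 𝔤} (hf : ∀ ν, ContDiffAt ℝ 2 (fun y => f y ν) x) :
    div3 (curl3 f) x = 0 := by
  have hdiff : ∀ ρ ν, DifferentiableAt ℝ (pderiv3 ρ fun y => f y ν) x := fun ρ ν =>
    ((hf ν).pderiv3 (m := 1) le_rfl ρ).differentiableAt one_ne_zero
  simp only [div3, curl3, pderiv3_sum_sum_smul _ hdiff]
  exact sum_levicivita_smul_eq_zero _ fun μ ρ ν => pderiv3_pderiv3_comm (hf ν) μ ρ

lemma div3_crossBr {f g : ℝ³ → Fin 3 → 𝔤} (hf : ∀ ν, DifferentiableAt ℝ (fun y => f y ν) x)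
    (hg : ∀ ν, DifferentiableAt ℝ (fun y => g y ν) x) :
    div3 (fun y => crossBr br (f y) (g y)) x
      = dotBr br (curl3 f x) (g x) - dotBr br (f x) (curl3 g x) := by
  have hfg : ∀ ρ ν, DifferentiableAt ℝ (fun y => br (f y ρ) (g y ν)) x := fun ρ ν =>
    (br.differentiableAt.comp x (hf ρ)).clm_apply (hg ν)
  simp only [div3, crossBr]
  simp only [pderiv3_sum_sum_smul _ hfg, pderiv3_br br (hf _) (hg _)]
  simp only [dotBr, curl3, Fin.sum_univ_three, levicivita, map_add, map_smul, add_apply,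
    smul_apply, smul_add]
  norm_num
  module

lemma contDiffAt_curl3 {m n : WithTop ℕ∞} {f : ℝ³ → Fin 3 → 𝔤}
    (hf : ∀ ν, ContDiffAt ℝ n (fun y => f y ν) x) (hmn : m + 1 ≤ n) (α : Fin 3) :
    ContDiffAt ℝ m (fun y => curl3 f y α) x :=
  ContDiffAt.sum fun ρ _ => ContDiffAt.sum fun ν _ => ((hf ν).pderiv3 hmn ρ).const_smul _

lemma contDiffAt_crossBr {n : WithTop ℕ∞} {f g : ℝ³ → Fin 3 → 𝔤}
    (hf : ∀ ν, ContDiffAt ℝ n (fun y => f y ν) x) (hg : ∀ ν, ContDiffAt ℝ n (fun y => g y ν) x)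
    (α : Fin 3) : ContDiffAt ℝ n (fun y => crossBr br (f y) (g y) α) x :=
  ContDiffAt.sum fun ρ _ => ContDiffAt.sum fun ν _ =>
    ((br.contDiff.contDiffAt.comp x (hf ρ)).clm_apply (hg ν)).const_smul _

lemma differentiableAt_crossBr {f g : ℝ³ → Fin 3 → 𝔤}
    (hf : ∀ ν, DifferentiableAt ℝ (fun y => f y ν) x)
    (hg : ∀ ν, DifferentiableAt ℝ (fun y => g y ν) x) (α : Fin 3) :
    DifferentiableAt ℝ (fun y => crossBr br (f y) (g y) α) x :=
  DifferentiableAt.fun_sum fun ρ _ => DifferentiableAt.fun_sum fun ν _ =>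
    ((br.differentiableAt.comp x (hf ρ)).clm_apply (hg ν)).const_smul _

end VectorCalculus

section Covariant

variable {𝔤 : Type*} [NormedAddCommGroup 𝔤] [NormedSpace ℝ 𝔤] (br : 𝔤 →L[ℝ] 𝔤 →L[ℝ] 𝔤)
  {x : ℝ³}

noncomputable def covCurl (a b : ℝ³ → Fin 3 → 𝔤) : ℝ³ → Fin 3 → 𝔤 :=
  fun y => curl3 b y + crossBr br (a y) (b y)

noncomputable def covDiv (a e : ℝ³ → Fin 3 → 𝔤) (x : ℝ³) : 𝔤 :=
  div3 e x + dotBr br (a x) (e x)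

noncomputable def magneticField (a : ℝ³ → Fin 3 → 𝔤) : ℝ³ → Fin 3 → 𝔤 :=
  fun y => curl3 a y + (1 / 2 : ℝ) • crossBr br (a y) (a y)

lemma contDiffAt_magneticField {m n : WithTop ℕ∞} {a : ℝ³ → Fin 3 → 𝔤}
    (ha : ∀ ν, ContDiffAt ℝ n (fun y => a y ν) x) (hmn : m + 1 ≤ n) (α : Fin 3) :
    ContDiffAt ℝ m (fun y => magneticField br a y α) x :=
  have ha' ν : ContDiffAt ℝ m (fun y => a y ν) x := (ha ν).of_le (le_self_add.trans hmn)
  (contDiffAt_curl3 ha hmn α).add ((contDiffAt_crossBr br ha' ha' α).const_smul _)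

lemma covDiv_covCurl {a b : ℝ³ → Fin 3 → 𝔤} (ha : ∀ ν, DifferentiableAt ℝ (fun y => a y ν) x)
    (hb : ∀ ν, ContDiffAt ℝ 2 (fun y => b y ν) x) :
    covDiv br a (covCurl br a b) x
      = dotBr br (curl3 a x) (b x) + dotBr br (a x) (crossBr br (a x) (b x)) := by
  have hb' ν : DifferentiableAt ℝ (fun y => b y ν) x := (hb ν).differentiableAt two_ne_zero
  unfold covDiv covCurl
  rw [div3_add (fun α => (contDiffAt_curl3 hb (m := 1) le_rfl α).differentiableAt one_ne_zero)
      (differentiableAt_crossBr br ha hb'), div3_curl3 hb, div3_crossBr br ha hb']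
  simp only [dotBr, Pi.add_apply, map_add, Finset.sum_add_distrib]
  abel

lemma covDiv_covCurl_magneticField (br_alt : ∀ a, br a a = 0)
    (br_jacobi : ∀ a b c, br a (br b c) + br b (br c a) + br c (br a b) = 0)
    {a : ℝ³ → Fin 3 → 𝔤} (ha : ∀ ν, ContDiffAt ℝ 3 (fun y => a y ν) x) :
    covDiv br a (covCurl br a (magneticField br a)) x = 0 := by
  rw [covDiv_covCurl br (fun ν => (ha ν).differentiableAt (by norm_num))
    (contDiffAt_magneticField br ha (by norm_num))]
  exact dotBr_add_dotBr_crossBr_eq_zero br br_alt br_jacobi (a x) (curl3 a x)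

end Covariant

section TimeDerivatives

variable {F : Type*} [NormedAddCommGroup F] [NormedSpace ℝ F] {t : ℝ}

lemma hasDerivAt_time_slice {H : Type*} [NormedAddCommGroup H] [NormedSpace ℝ H] {g : ℝ × H → F}
    {y : H} (hg : DifferentiableAt ℝ g (t, y)) :
    HasDerivAt (fun s => g (s, y)) (fderiv ℝ g (t, y) (1, 0)) t :=
  hg.hasFDerivAt.comp_hasDerivAt t ((hasDerivAt_id t).prodMk (hasDerivAt_const t y))

lemma pderiv3_space_slice {g : ℝ × ℝ³ → F} {x : ℝ³} (hg : DifferentiableAt ℝ g (t, x))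
    (μ : Fin 3) :
    pderiv3 μ (fun y => g (t, y)) x = fderiv ℝ g (t, x) (0, EuclideanSpace.single μ 1) :=
  (hg.hasFDerivAt.comp x (hasFDerivAt_prodMk_right t x)).pderiv3_eq μ

-- Both derivatives are `D²g (t, x)` applied to `(1, 0)` and `(0, eμ)`, in the two orders.
lemma hasDerivAt_pderiv3_time {g : ℝ × ℝ³ → F} {x : ℝ³} (hg : ContDiffAt ℝ 2 g (t, x))
    (μ : Fin 3) :
    HasDerivAt (fun s => pderiv3 μ (fun y => g (s, y)) x)
      (pderiv3 μ (fun y => deriv (fun s => g (s, y)) t) x) t := by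
  set e : ℝ × ℝ³ := (1, 0)
  set w : ℝ × ℝ³ := (0, EuclideanSpace.single μ 1)
  have hdiff : ∀ᶠ p in 𝓝 (t, x), DifferentiableAt ℝ g p :=
    (hg.eventually (by simp)).mono fun p hp => hp.differentiableAt two_ne_zero
  have hD := hg.differentiableAt_fderiv
  have h_time : (fun s => pderiv3 μ (fun y => g (s, y)) x) =ᶠ[𝓝 t]
      fun s => fderiv ℝ g (s, x) w :=
    ((continuous_id.prodMk continuous_const).tendsto' t (t, x) rfl).eventually hdiff |>.mono
      fun s hs => pderiv3_space_slice hs μ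
  have h_space : (fun y => deriv (fun s => g (s, y)) t) =ᶠ[𝓝 x]
      fun y => fderiv ℝ g (t, y) e :=
    ((continuous_const.prodMk continuous_id).tendsto' x (t, x) rfl).eventually hdiff |>.mono
      fun y hy => (hasDerivAt_time_slice hy).deriv
  rw [h_space.pderiv3_eq, pderiv3_space_slice (hasFDerivAt_fderiv_apply hD e).differentiableAt,
    (hasFDerivAt_fderiv_apply hD e).fderiv, ContinuousLinearMap.flip_apply,
    hg.fderiv_fderiv_comm]
  have h := hasDerivAt_time_slice (hasFDerivAt_fderiv_apply hD w).differentiableAt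
  rw [(hasFDerivAt_fderiv_apply hD w).fderiv] at h
  exact h.congr_of_eventuallyEq h_time

lemma hasDerivAt_div3_time {E : ℝ → ℝ³ → Fin 3 → F} {x : ℝ³}
    (hE : ∀ μ, ContDiffAt ℝ 2 (fun p : ℝ × ℝ³ => E p.1 p.2 μ) (t, x)) :
    HasDerivAt (fun s => div3 (E s) x) (div3 (fun y μ => deriv (fun s => E s y μ) t) x) t :=
  HasDerivAt.fun_sum fun μ _ => hasDerivAt_pderiv3_time (hE μ) μ

lemma hasDerivAt_dotBr (br : F →L[ℝ] F →L[ℝ] F) {a e : ℝ → Fin 3 → F} {a' e' : Fin 3 → F}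
    (ha : ∀ α, HasDerivAt (fun s => a s α) (a' α) t)
    (he : ∀ α, HasDerivAt (fun s => e s α) (e' α) t) :
    HasDerivAt (fun s => dotBr br (a s) (e s)) (dotBr br a' (e t) + dotBr br (a t) e') t := by
  rw [dotBr, dotBr, ← Finset.sum_add_distrib]
  exact HasDerivAt.fun_sum fun α _ =>
    (br.hasFDerivAt.comp_hasDerivAt t (ha α)).clm_apply (he α)

end TimeDerivatives

section SmoothFields

variable {H F ι : Type*} [NormedAddCommGroup H] [NormedSpace ℝ H] [NormedAddCommGroup F]
  [NormedSpace ℝ F] [Fintype ι] {n : WithTop ℕ∞} {f : ℝ → H → ι → F} {U : Set H} {y : H}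

lemma ContDiffOn.contDiffAt_component
    (hf : ContDiffOn ℝ n (fun p : ℝ × H => f p.1 p.2) (Set.univ ×ˢ U)) (hU : IsOpen U)
    (hy : y ∈ U) (τ : ℝ) (ν : ι) : ContDiffAt ℝ n (fun p : ℝ × H => f p.1 p.2 ν) (τ, y) :=
  contDiffAt_pi.1 (hf.contDiffAt ((isOpen_univ.prod hU).mem_nhds ⟨trivial, hy⟩)) ν

lemma ContDiffOn.contDiffAt_space_component
    (hf : ContDiffOn ℝ n (fun p : ℝ × H => f p.1 p.2) (Set.univ ×ˢ U)) (hU : IsOpen U)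
    (hy : y ∈ U) (τ : ℝ) (ν : ι) : ContDiffAt ℝ n (fun z => f τ z ν) y :=
  (hf.contDiffAt_component hU hy τ ν).comp y (contDiffAt_const.prodMk contDiffAt_id)

lemma ContDiffOn.hasDerivAt_time_component
    (hf : ContDiffOn ℝ n (fun p : ℝ × H => f p.1 p.2) (Set.univ ×ˢ U)) (hn : n ≠ 0)
    (hU : IsOpen U) (hy : y ∈ U) (τ : ℝ) (ν : ι) :
    HasDerivAt (fun s => f s y ν) (deriv (fun s => f s y ν) τ) τ :=
  (hasDerivAt_time_slice ((hf.contDiffAt_component hU hy τ ν).differentiableAt hn))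
    |>.differentiableAt.hasDerivAt

end SmoothFields

theorem yangMills_constraint_preservation_general {𝔤 : Type*} [NormedAddCommGroup 𝔤]
    [NormedSpace ℝ 𝔤]
    (br : 𝔤 →L[ℝ] 𝔤 →L[ℝ] 𝔤)
    (br_alt : ∀ a : 𝔤, br a a = 0)
    (br_jacobi : ∀ a b c : 𝔤, br a (br b c) + br b (br c a) + br c (br a b) = 0)
    (U : Set (EuclideanSpace ℝ (Fin 3))) (hU : IsOpen U)
    (A E : ℝ → EuclideanSpace ℝ (Fin 3) → Fin 3 → 𝔤)
    (hA : ContDiffOn ℝ (⊤ : ℕ∞) (fun p : ℝ × EuclideanSpace ℝ (Fin 3) => A p.1 p.2)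
      (Set.univ ×ˢ U))
    (hE : ContDiffOn ℝ (⊤ : ℕ∞) (fun p : ℝ × EuclideanSpace ℝ (Fin 3) => E p.1 p.2)
      (Set.univ ×ˢ U))
    (B : ℝ → EuclideanSpace ℝ (Fin 3) → Fin 3 → 𝔤)
    (hB : ∀ t : ℝ, B t = fun y α => curl3 (A t) y α + (1/2 : ℝ) • crossBr br (A t y) (A t y) α)
    (hevolA : ∀ t : ℝ, ∀ x ∈ U, ∀ μ : Fin 3, deriv (fun s => A s x μ) t = - E t x μ)
    (hevolE : ∀ t : ℝ, ∀ x ∈ U, ∀ α : Fin 3,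
      deriv (fun s => E s x α) t = curl3 (B t) x α + crossBr br (A t x) (B t x) α) :
    ∀ x ∈ U, ∀ t t' : ℝ,
      div3 (E t) x + dotBr br (A t x) (E t x)
        = div3 (E t') x + dotBr br (A t' x) (E t' x) := by
  intro x hx t t'
  obtain rfl : B = fun τ => magneticField br (A τ) := funext hB
  suffices hderiv : ∀ τ, HasDerivAt (fun s => covDiv br (A s) (E s) x) 0 τ from
    is_const_of_deriv_eq_zero (fun s => (hderiv s).differentiableAt) (fun s => (hderiv s).deriv)
      t t'
  intro τ
  have hEdot : (fun y μ => deriv (fun s => E s y μ) τ) =ᶠ[𝓝 x]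
      covCurl br (A τ) (magneticField br (A τ)) :=
    Filter.eventually_of_mem (hU.mem_nhds hx) fun y hy => funext (hevolE τ y hy)
  have hdiv : HasDerivAt (fun s => div3 (E s) x)
      (div3 (covCurl br (A τ) (magneticField br (A τ))) x) τ :=
    hEdot.div3_eq ▸ hasDerivAt_div3_time fun μ =>
      (hE.contDiffAt_component hU hx τ μ).of_le (by norm_cast)
  have hdot := hasDerivAt_dotBr br (a' := -E τ x)
    (e' := covCurl br (A τ) (magneticField br (A τ)) x)
    (fun α => hevolA τ x hx α ▸ hA.hasDerivAt_time_component (by decide) hU hx τ α)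
    (fun α => hevolE τ x hx α ▸ hE.hasDerivAt_time_component (by decide) hU hx τ α)
  refine (hdiv.fun_add hdot).congr_deriv ?_
  rw [dotBr_neg_left, dotBr_self br br_alt, neg_zero, zero_add]
  exact covDiv_covCurl_magneticField br br_alt br_jacobi
    fun ν => (hA.contDiffAt_space_component hU hx τ ν).of_le (by norm_cast)

/-- preservation of the constraint `div E + ⋆[A,⋆E] = 0` by the
Yang–Mills evolution in temporal gauge. -/
theorem yangMills_constraint_preservation {𝔤 : Type*} [NormedAddCommGroup 𝔤]
    [NormedSpace ℝ 𝔤] [FiniteDimensional ℝ 𝔤]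
    (br : 𝔤 →L[ℝ] 𝔤 →L[ℝ] 𝔤)
    (br_alt : ∀ a : 𝔤, br a a = 0)
    (br_jacobi : ∀ a b c : 𝔤, br a (br b c) + br b (br c a) + br c (br a b) = 0)
    (U : Set (EuclideanSpace ℝ (Fin 3))) (hU : IsOpen U)
    (A E : ℝ → EuclideanSpace ℝ (Fin 3) → Fin 3 → 𝔤)
    (hA : ContDiffOn ℝ (⊤ : ℕ∞) (fun p : ℝ × EuclideanSpace ℝ (Fin 3) => A p.1 p.2)
      (Set.univ ×ˢ U))
    (hE : ContDiffOn ℝ (⊤ : ℕ∞) (fun p : ℝ × EuclideanSpace ℝ (Fin 3) => E p.1 p.2)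
      (Set.univ ×ˢ U))
    (B : ℝ → EuclideanSpace ℝ (Fin 3) → Fin 3 → 𝔤)
    (hB : ∀ t : ℝ, B t = fun y α => curl3 (A t) y α + (1/2 : ℝ) • crossBr br (A t y) (A t y) α)
    (hevolA : ∀ t : ℝ, ∀ x ∈ U, ∀ μ : Fin 3, deriv (fun s => A s x μ) t = - E t x μ)
    (hevolE : ∀ t : ℝ, ∀ x ∈ U, ∀ α : Fin 3,
      deriv (fun s => E s x α) t = curl3 (B t) x α + crossBr br (A t x) (B t x) α) :
    ∀ x ∈ U, ∀ t t' : ℝ,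
      div3 (E t) x + dotBr br (A t x) (E t x)
        = div3 (E t') x + dotBr br (A t' x) (E t' x) :=
  yangMills_constraint_preservation_general br br_alt br_jacobi U hU A E hA hE B hB hevolA hevolE
end

section
/- Let V and Y be real inner product spaces, C : V → Y a linear map, β : V × V → Y a symmetric bilinear map, δt > 0 a real number and θ ∈ [1/2, 1]. Let A⁰, A¹, E⁰, E¹ ∈ V, set Bⁱ := C(Aⁱ) + (1/2)β(Aⁱ, Aⁱ) for i = 0, 1, and write Z^θ := θ•Z¹ + (1−θ)•Z⁰ for Z ∈ {A, E, B}. Assume: (i) A¹ − A⁰ = −δt • E^θ; (ii) for all v ∈ V, ⟪E¹ − E⁰, v⟫_V = δt • ⟪B^θ, C(v) + β((1/2)•(A⁰ + A¹), v)⟫_Y. Then (1/2)‖E¹‖² + (1/2)‖B¹‖² ≤ (1/2)‖E⁰‖² + (1/2)‖B⁰‖², with equality when θ = 1/2. (This is the energy decay/conservation of the θ-scheme for the unconstrained discrete Yang–Mills system.) -/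
/-!
Testing the `E`-equation with `v = E^θ` and pairing the `A`-equation, through the exact
difference formula `B¹ - B⁰ = C(A¹ - A⁰) + β(½(A⁰ + A¹), A¹ - A⁰)`, with `B^θ` makes the two
cross terms `⟪E¹ - E⁰, E^θ⟫` and `⟪B¹ - B⁰, B^θ⟫` cancel. Since
`‖a‖² - ‖b‖² = 2⟪a - b, θa + (1-θ)b⟫ + (1 - 2θ)‖a - b‖²`, the energy then changes by
`(1 - 2θ)/2 · (‖E¹ - E⁰‖² + ‖B¹ - B⁰‖²)`, which is `≤ 0` for `θ ≥ 1/2` and `0` for `θ = 1/2`.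
-/

open scoped RealInnerProductSpace

theorem norm_sq_sub_norm_sq_eq_inner_convexComb {H : Type*} [NormedAddCommGroup H]
    [InnerProductSpace ℝ H] (a b : H) (θ : ℝ) :
    ‖a‖ ^ 2 - ‖b‖ ^ 2 = 2 * ⟪a - b, θ • a + (1 - θ) • b⟫ + (1 - 2 * θ) * ‖a - b‖ ^ 2 := by
  have hsum : a + b = (2 : ℝ) • (θ • a + (1 - θ) • b) + (1 - 2 * θ) • (a - b) := by module
  calc ‖a‖ ^ 2 - ‖b‖ ^ 2 = ⟪a - b, a + b⟫ := by
        rw [← real_inner_self_eq_norm_sq, ← real_inner_self_eq_norm_sq, inner_sub_left,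
          inner_add_right, inner_add_right, real_inner_comm b a]
        ring
    _ = _ := by
        rw [hsum, inner_add_right, real_inner_smul_right, real_inner_smul_right,
          real_inner_self_eq_norm_sq]

theorem linear_add_half_quadratic_sub {V Y : Type*} [AddCommGroup V] [Module ℝ V]
    [AddCommGroup Y] [Module ℝ Y] (C : V →ₗ[ℝ] Y) (β : V →ₗ[ℝ] V →ₗ[ℝ] Y)
    (βsymm : ∀ x y : V, β x y = β y x) (x y : V) :
    (C y + (1/2 : ℝ) • β y y) - (C x + (1/2 : ℝ) • β x x)
      = C (y - x) + β ((1/2 : ℝ) • (x + y)) (y - x) := by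
  simp only [map_add, map_sub, map_smul, LinearMap.add_apply, LinearMap.smul_apply]
  rw [βsymm x y]
  module

theorem half_norm_sq_add_half_norm_sq_sub_eq {V Y : Type*}
    [NormedAddCommGroup V] [InnerProductSpace ℝ V]
    [NormedAddCommGroup Y] [InnerProductSpace ℝ Y] (θ : ℝ) (E₀ E₁ : V) (B₀ B₁ : Y)
    (hcancel : ⟪E₁ - E₀, θ • E₁ + (1 - θ) • E₀⟫ + ⟪B₁ - B₀, θ • B₁ + (1 - θ) • B₀⟫ = 0) :
    (1/2) * ‖E₁‖ ^ 2 + (1/2) * ‖B₁‖ ^ 2 - ((1/2) * ‖E₀‖ ^ 2 + (1/2) * ‖B₀‖ ^ 2)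
      = (1 - 2 * θ) / 2 * (‖E₁ - E₀‖ ^ 2 + ‖B₁ - B₀‖ ^ 2) := by
  have hE := norm_sq_sub_norm_sq_eq_inner_convexComb E₁ E₀ θ
  have hB := norm_sq_sub_norm_sq_eq_inner_convexComb B₁ B₀ θ
  linear_combination (1/2 : ℝ) * hE + (1/2 : ℝ) * hB + hcancel

theorem theta_scheme_energy_decay_general {V Y : Type*}
    [NormedAddCommGroup V] [InnerProductSpace ℝ V]
    [NormedAddCommGroup Y] [InnerProductSpace ℝ Y]
    (C : V →ₗ[ℝ] Y) (β : V →ₗ[ℝ] V →ₗ[ℝ] Y)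
    (βsymm : ∀ x y : V, β x y = β y x)
    (δt : ℝ) (θ : ℝ) (hθ₁ : 1/2 ≤ θ)
    (A₀ A₁ E₀ E₁ : V) (B₀ B₁ : Y)
    (hB₀ : B₀ = C A₀ + (1/2 : ℝ) • β A₀ A₀)
    (hB₁ : B₁ = C A₁ + (1/2 : ℝ) • β A₁ A₁)
    (hevolA : A₁ - A₀ = -(δt • (θ • E₁ + (1 - θ) • E₀)))
    (hevolE : ∀ v : V, ⟪E₁ - E₀, v⟫
      = δt * ⟪θ • B₁ + (1 - θ) • B₀, C v + β ((1/2 : ℝ) • (A₀ + A₁)) v⟫) :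
    (1/2) * ‖E₁‖ ^ 2 + (1/2) * ‖B₁‖ ^ 2 ≤ (1/2) * ‖E₀‖ ^ 2 + (1/2) * ‖B₀‖ ^ 2
      ∧ (θ = 1/2 →
        (1/2) * ‖E₁‖ ^ 2 + (1/2) * ‖B₁‖ ^ 2 = (1/2) * ‖E₀‖ ^ 2 + (1/2) * ‖B₀‖ ^ 2) := by
  set Eθ := θ • E₁ + (1 - θ) • E₀
  set Bθ := θ • B₁ + (1 - θ) • B₀
  set W := C Eθ + β ((1/2 : ℝ) • (A₀ + A₁)) Eθ
  have hBdiff : B₁ - B₀ = -(δt • W) := by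
    rw [hB₀, hB₁, linear_add_half_quadratic_sub C β βsymm, hevolA]
    simp only [W, map_neg, map_smul]
    module
  have hcancel : ⟪E₁ - E₀, Eθ⟫ + ⟪B₁ - B₀, Bθ⟫ = 0 := by
    rw [hevolE Eθ, hBdiff, inner_neg_left, real_inner_smul_left, real_inner_comm W Bθ]
    ring
  have henergy := half_norm_sq_add_half_norm_sq_sub_eq θ E₀ E₁ B₀ B₁ hcancel
  refine ⟨?_, fun hθ ↦ ?_⟩
  · have : (1 - 2 * θ) / 2 * (‖E₁ - E₀‖ ^ 2 + ‖B₁ - B₀‖ ^ 2) ≤ 0 :=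
      mul_nonpos_of_nonpos_of_nonneg (by linarith) (by positivity)
    linarith
  · rw [hθ] at henergy
    linarith

/-- energy decay of the one-step θ-scheme for the unconstrained discrete
Yang–Mills system, with conservation (equality) when `θ = 1/2`. -/
theorem theta_scheme_energy_decay {V Y : Type*}
    [NormedAddCommGroup V] [InnerProductSpace ℝ V]
    [NormedAddCommGroup Y] [InnerProductSpace ℝ Y]
    (C : V →ₗ[ℝ] Y) (β : V →ₗ[ℝ] V →ₗ[ℝ] Y)
    (βsymm : ∀ x y : V, β x y = β y x)
    (δt : ℝ) (hδt : 0 < δt) (θ : ℝ) (hθ₁ : 1/2 ≤ θ) (hθ₂ : θ ≤ 1)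
    (A₀ A₁ E₀ E₁ : V) (B₀ B₁ : Y)
    (hB₀ : B₀ = C A₀ + (1/2 : ℝ) • β A₀ A₀)
    (hB₁ : B₁ = C A₁ + (1/2 : ℝ) • β A₁ A₁)
    (hevolA : A₁ - A₀ = -(δt • (θ • E₁ + (1 - θ) • E₀)))
    (hevolE : ∀ v : V, ⟪E₁ - E₀, v⟫
      = δt * ⟪θ • B₁ + (1 - θ) • B₀, C v + β ((1/2 : ℝ) • (A₀ + A₁)) v⟫) :
    (1/2) * ‖E₁‖ ^ 2 + (1/2) * ‖B₁‖ ^ 2 ≤ (1/2) * ‖E₀‖ ^ 2 + (1/2) * ‖B₀‖ ^ 2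
      ∧ (θ = 1/2 →
        (1/2) * ‖E₁‖ ^ 2 + (1/2) * ‖B₁‖ ^ 2 = (1/2) * ‖E₀‖ ^ 2 + (1/2) * ‖B₀‖ ^ 2) :=
  theta_scheme_energy_decay_general C β βsymm δt θ hθ₁ A₀ A₁ E₀ E₁ B₀ B₁ hB₀ hB₁ hevolA hevolE
end

section
/- Let V and W be real inner product spaces, G : W → V a linear map, and T : V × V × W → ℝ a trilinear map satisfying T(x, x, q) = 0 for all x ∈ V and q ∈ W. Let θ ∈ ℝ, let (δtⁿ)_{n∈ℕ} be positive reals, and let (Aⁿ)_{n∈ℕ}, (Eⁿ)_{n∈ℕ} be sequences in V such that for every n: (i) Aⁿ⁺¹ − Aⁿ = −δtⁿ • (θ•Eⁿ⁺¹ + (1−θ)•Eⁿ); (ii) for all q ∈ W, ⟪Eⁿ⁺¹ − Eⁿ, G(q)⟫_V + T(Eⁿ⁺¹ − Eⁿ, (1−θ)•Aⁿ⁺¹ + θ•Aⁿ, q) = 0. Define the constraint functional 𝔠ⁿ(q) := ⟪Eⁿ, G(q)⟫_V + T(Eⁿ, Aⁿ, q). Then 𝔠ⁿ(q) = 𝔠⁰(q)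 for every n ∈ ℕ and every q ∈ W. (This is the exact constraint preservation of the constrained θ-scheme for the Yang–Mills equations.) -/
/-!
By the θ-weighted product rule for the bilinear map `T`, the increment of the constraint
functional is the left side of the `E`-equation plus `T(u, Aⁿ⁺¹ - Aⁿ, q)` with
`u = θ Eⁿ⁺¹ + (1 - θ) Eⁿ`. The `A`-equation makes `Aⁿ⁺¹ - Aⁿ` a multiple of `u`, so the last
term vanishes because `T` is alternating.
-/

open scoped RealInnerProductSpace

theorem LinearMap.map_sub_map_eq_theta {R M N P : Type*} [CommRing R]
    [AddCommGroup M] [Module R M] [AddCommGroup N] [Module R N] [AddCommGroup P] [Module R P]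
    (B : M →ₗ[R] N →ₗ[R] P) (θ : R) (x x' : M) (y y' : N) :
    B x' y' - B x y =
      B (x' - x) ((1 - θ) • y' + θ • y) + B (θ • x' + (1 - θ) • x) (y' - y) := by
  simp only [map_sub, map_add, map_smul, LinearMap.sub_apply, LinearMap.add_apply,
    LinearMap.smul_apply]
  module

theorem theta_step_preserves_constraint {V W : Type*}
    [NormedAddCommGroup V] [InnerProductSpace ℝ V] [AddCommGroup W] [Module ℝ W]
    (G : W →ₗ[ℝ] V) (T : V →ₗ[ℝ] V →ₗ[ℝ] W →ₗ[ℝ] ℝ) (Talt : ∀ (x : V) (q : W), T x x q = 0)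
    (θ δ : ℝ) {a a' e e' : V} (q : W)
    (hA : a' - a = -(δ • (θ • e' + (1 - θ) • e)))
    (hE : ⟪e' - e, G q⟫ + T (e' - e) ((1 - θ) • a' + θ • a) q = 0) :
    ⟪e', G q⟫ + T e' a' q = ⟪e, G q⟫ + T e a q := by
  have product_rule := LinearMap.congr_fun (T.map_sub_map_eq_theta θ e e' a a') q
  have increment_vanishes : T (θ • e' + (1 - θ) • e) (a' - a) q = 0 := by
    rw [hA, map_neg, map_smul, LinearMap.neg_apply, LinearMap.smul_apply, Talt, smul_zero,
      neg_zero]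
  simp only [LinearMap.sub_apply, LinearMap.add_apply] at product_rule
  rw [inner_sub_left] at hE
  linarith

theorem theta_scheme_constraint_preservation_general {V W : Type*}
    [NormedAddCommGroup V] [InnerProductSpace ℝ V]
    [NormedAddCommGroup W] [InnerProductSpace ℝ W]
    (G : W →ₗ[ℝ] V) (T : V →ₗ[ℝ] V →ₗ[ℝ] W →ₗ[ℝ] ℝ)
    (Talt : ∀ (x : V) (q : W), T x x q = 0)
    (θ : ℝ) (δt : ℕ → ℝ)
    (A E : ℕ → V)
    (hevolA : ∀ n : ℕ, A (n + 1) - A n = -(δt n • (θ • E (n + 1) + (1 - θ) • E n)))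
    (hevolE : ∀ (n : ℕ) (q : W),
      ⟪E (n + 1) - E n, G q⟫
        + T (E (n + 1) - E n) ((1 - θ) • A (n + 1) + θ • A n) q = 0) :
    ∀ (n : ℕ) (q : W),
      ⟪E n, G q⟫ + T (E n) (A n) q = ⟪E 0, G q⟫ + T (E 0) (A 0) q := by
  intro n q
  induction n with
  | zero => rfl
  | succ n ih =>
    exact (theta_step_preserves_constraint G T Talt θ (δt n) q (hevolA n) (hevolE n q)).trans ih

/-- exact constraint preservation of the constrained θ-scheme for the
Yang–Mills equations: the constraint functional
`𝔠ⁿ(q) = ⟪Eⁿ, G(q)⟫ + T(Eⁿ, Aⁿ, q)` is independent of `n`. -/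
theorem theta_scheme_constraint_preservation {V W : Type*}
    [NormedAddCommGroup V] [InnerProductSpace ℝ V]
    [NormedAddCommGroup W] [InnerProductSpace ℝ W]
    (G : W →ₗ[ℝ] V) (T : V →ₗ[ℝ] V →ₗ[ℝ] W →ₗ[ℝ] ℝ)
    (Talt : ∀ (x : V) (q : W), T x x q = 0)
    (θ : ℝ) (δt : ℕ → ℝ) (hδt : ∀ n, 0 < δt n)
    (A E : ℕ → V)
    (hevolA : ∀ n : ℕ, A (n + 1) - A n = -(δt n • (θ • E (n + 1) + (1 - θ) • E n)))
    (hevolE : ∀ (n : ℕ) (q : W),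
      ⟪E (n + 1) - E n, G q⟫
        + T (E (n + 1) - E n) ((1 - θ) • A (n + 1) + θ • A n) q = 0) :
    ∀ (n : ℕ) (q : W),
      ⟪E n, G q⟫ + T (E n) (A n) q = ⟪E 0, G q⟫ + T (E 0) (A 0) q :=
  theta_scheme_constraint_preservation_general G T Talt θ δt A E hevolA hevolE
end

section
/- Let V, W, Y be real inner product spaces, G : W → V and C : V → Y linear maps, β : V × V → Y a symmetric bilinear map, and T : V × V × W → ℝ a trilinear map with T(x, x, q) = 0 for all x ∈ V, q ∈ W. Let δt > 0, A⁰, A¹, E⁰, E¹ ∈ V, λ ∈ W, and set Bⁱ := C(Aⁱ) + (1/2)β(Aⁱ, Aⁱ) for i = 0, 1. Assume: (i) A¹ − A⁰ = −δt • E¹ (implicit Euler, θ = 1); (ii) for all v ∈ V, ⟪E¹ − E⁰, v⟫_V + δt•(⟪G(λ), v⟫_V + T(v, A¹, λ)) = δt • ⟪B¹, C(v) + β((1/2)•(A⁰ + A¹), v)⟫_Y; (iii) for all q ∈ W, ⟪E¹ − E⁰, G(q)⟫_V + T(E¹ − E⁰, A⁰, q) = 0; (iv) the initial constraint vanishes: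 ⟪E⁰, G(q)⟫_V + T(E⁰, A⁰, q) = 0 for all q ∈ W. Then (1/2)‖E¹‖² + (1/2)‖B¹‖² ≤ (1/2)‖E⁰‖² + (1/2)‖B⁰‖². (This is the energy dissipation of the constrained implicit Euler scheme for the Yang–Mills equations.) -/
/-!
Testing the electric-field equation with `v = E¹` and eliminating the multiplier term with the
discrete constraint `⟪E¹, G λ⟫ + T(E¹, A⁰, λ) = 0` (the sum of (iii) and (iv)) leaves
`⟪E¹ - E⁰, E¹⟫ = δt ⟪B¹, C E¹ + β(Ā, E¹)⟫`; the alternation of `T` makes `T(E¹, A¹, λ) = T(E¹, A⁰, λ)`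
along the step `A¹ = A⁰ - δt E¹`. The midpoint `Ā = (A⁰ + A¹)/2` is exactly what makes the discrete
chain rule `B¹ - B⁰ = C(A¹ - A⁰) + β(Ā, A¹ - A⁰) = -δt (C E¹ + β(Ā, E¹))` hold, so
`⟪E¹ - E⁰, E¹⟫ + ⟪B¹ - B⁰, B¹⟫ = 0`. The implicit step then dissipates energy because
`2⟪x - y, x⟫ = ‖x‖² - ‖y‖² + ‖x - y‖²`.
-/

open scoped RealInnerProductSpace

theorem norm_sq_sub_norm_sq_le_two_mul_inner_sub {F : Type*} [NormedAddCommGroup F]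
    [InnerProductSpace ℝ F] (x y : F) : ‖x‖ ^ 2 - ‖y‖ ^ 2 ≤ 2 * ⟪x - y, x⟫ := by
  have hxy := norm_sub_sq_real x y
  rw [inner_sub_left, real_inner_self_eq_norm_sq, real_inner_comm]
  nlinarith [sq_nonneg ‖x - y‖]

theorem half_norm_sq_add_le_of_inner_sub_add_inner_sub_eq_zero {F K : Type*}
    [NormedAddCommGroup F] [InnerProductSpace ℝ F] [NormedAddCommGroup K] [InnerProductSpace ℝ K]
    {x₀ x₁ : F} {y₀ y₁ : K} (h : ⟪x₁ - x₀, x₁⟫ + ⟪y₁ - y₀, y₁⟫ = 0) :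
    (1/2) * ‖x₁‖ ^ 2 + (1/2) * ‖y₁‖ ^ 2 ≤ (1/2) * ‖x₀‖ ^ 2 + (1/2) * ‖y₀‖ ^ 2 := by
  linarith [norm_sq_sub_norm_sq_le_two_mul_inner_sub x₁ x₀,
    norm_sq_sub_norm_sq_le_two_mul_inner_sub y₁ y₀]

theorem LinearMap.apply_self_sub_apply_self_of_symm {R M N : Type*} [CommRing R]
    [AddCommGroup M] [Module R M] [AddCommGroup N] [Module R N] (β : M →ₗ[R] M →ₗ[R] N)
    (hβ : ∀ x y, β x y = β y x) (x y : M) : β x x - β y y = β (x + y) (x - y) := by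
  simp only [map_add, map_sub, LinearMap.add_apply, hβ y x]
  abel

theorem LinearMap.apply_add_smul_self {R M P N : Type*} [CommRing R]
    [AddCommGroup M] [Module R M] [AddCommGroup P] [Module R P] [AddCommGroup N] [Module R N]
    (T : M →ₗ[R] M →ₗ[R] P →ₗ[R] N) (hT : ∀ x q, T x x q = 0) (x y : M) (c : R) (q : P) :
    T x (y + c • x) q = T x y q := by
  simp [hT]

/-- Discrete chain rule for the magnetic field `B(A) = C A + ½ β(A, A)`. -/
theorem magneticField_sub {V Y : Type*} [AddCommGroup V] [Module ℝ V] [AddCommGroup Y]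
    [Module ℝ Y] (C : V →ₗ[ℝ] Y) (β : V →ₗ[ℝ] V →ₗ[ℝ] Y) (hβ : ∀ x y, β x y = β y x)
    (A₀ A₁ : V) :
    (C A₁ + (1/2 : ℝ) • β A₁ A₁) - (C A₀ + (1/2 : ℝ) • β A₀ A₀)
      = C (A₁ - A₀) + β ((1/2 : ℝ) • (A₀ + A₁)) (A₁ - A₀) := by
  have hpolar := β.apply_self_sub_apply_self_of_symm hβ A₁ A₀
  rw [map_sub C, map_smul, LinearMap.smul_apply, add_comm A₀ A₁, ← hpolar, smul_sub]
  abel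

theorem constrained_implicit_euler_energy_dissipation_general {V W Y : Type*}
    [NormedAddCommGroup V] [InnerProductSpace ℝ V]
    [NormedAddCommGroup W] [InnerProductSpace ℝ W]
    [NormedAddCommGroup Y] [InnerProductSpace ℝ Y]
    (G : W →ₗ[ℝ] V) (C : V →ₗ[ℝ] Y) (β : V →ₗ[ℝ] V →ₗ[ℝ] Y)
    (βsymm : ∀ x y : V, β x y = β y x)
    (T : V →ₗ[ℝ] V →ₗ[ℝ] W →ₗ[ℝ] ℝ)
    (Talt : ∀ (x : V) (q : W), T x x q = 0)
    (δt : ℝ)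
    (A₀ A₁ E₀ E₁ : V) (lam : W) (B₀ B₁ : Y)
    (hB₀ : B₀ = C A₀ + (1/2 : ℝ) • β A₀ A₀)
    (hB₁ : B₁ = C A₁ + (1/2 : ℝ) • β A₁ A₁)
    (hevolA : A₁ - A₀ = -(δt • E₁))
    (hevolE : ∀ v : V,
      ⟪E₁ - E₀, v⟫ + δt * (⟪G lam, v⟫ + T v A₁ lam)
        = δt * ⟪B₁, C v + β ((1/2 : ℝ) • (A₀ + A₁)) v⟫)
    (hconstr : ∀ q : W, ⟪E₁ - E₀, G q⟫ + T (E₁ - E₀) A₀ q = 0)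
    (hinit : ∀ q : W, ⟪E₀, G q⟫ + T E₀ A₀ q = 0) :
    (1/2) * ‖E₁‖ ^ 2 + (1/2) * ‖B₁‖ ^ 2 ≤ (1/2) * ‖E₀‖ ^ 2 + (1/2) * ‖B₀‖ ^ 2 := by
  set Ā := (1/2 : ℝ) • (A₀ + A₁)
  have hconstr₁ : ⟪E₁, G lam⟫ + T E₁ A₀ lam = 0 := by
    have h := hconstr lam
    rw [inner_sub_left, map_sub, LinearMap.sub_apply, LinearMap.sub_apply] at h
    linarith [hinit lam]
  have hT : T E₁ A₁ lam = T E₁ A₀ lam := by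
    rw [eq_add_of_sub_eq hevolA, add_comm, ← neg_smul, T.apply_add_smul_self Talt]
  have hE : ⟪E₁ - E₀, E₁⟫ = δt * ⟪B₁, C E₁ + β Ā E₁⟫ := by
    linear_combination hevolE E₁ - δt * real_inner_comm E₁ (G lam) - δt * hT - δt * hconstr₁
  have hB : B₁ - B₀ = -(δt • (C E₁ + β Ā E₁)) := by
    rw [hB₀, hB₁, magneticField_sub C β βsymm, hevolA, map_neg, map_smul, map_neg, map_smul,
      ← neg_add, ← smul_add]
  apply half_norm_sq_add_le_of_inner_sub_add_inner_sub_eq_zero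
  rw [hB, hE, inner_neg_left, real_inner_smul_left, real_inner_comm B₁]
  ring

/-- energy dissipation of the constrained implicit Euler (θ = 1) scheme
for the Yang–Mills equations, assuming a vanishing initial constraint. -/
theorem constrained_implicit_euler_energy_dissipation {V W Y : Type*}
    [NormedAddCommGroup V] [InnerProductSpace ℝ V]
    [NormedAddCommGroup W] [InnerProductSpace ℝ W]
    [NormedAddCommGroup Y] [InnerProductSpace ℝ Y]
    (G : W →ₗ[ℝ] V) (C : V →ₗ[ℝ] Y) (β : V →ₗ[ℝ] V →ₗ[ℝ] Y)
    (βsymm : ∀ x y : V, β x y = β y x)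
    (T : V →ₗ[ℝ] V →ₗ[ℝ] W →ₗ[ℝ] ℝ)
    (Talt : ∀ (x : V) (q : W), T x x q = 0)
    (δt : ℝ) (hδt : 0 < δt)
    (A₀ A₁ E₀ E₁ : V) (lam : W) (B₀ B₁ : Y)
    (hB₀ : B₀ = C A₀ + (1/2 : ℝ) • β A₀ A₀)
    (hB₁ : B₁ = C A₁ + (1/2 : ℝ) • β A₁ A₁)
    (hevolA : A₁ - A₀ = -(δt • E₁))
    (hevolE : ∀ v : V,
      ⟪E₁ - E₀, v⟫ + δt * (⟪G lam, v⟫ + T v A₁ lam)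
        = δt * ⟪B₁, C v + β ((1/2 : ℝ) • (A₀ + A₁)) v⟫)
    (hconstr : ∀ q : W, ⟪E₁ - E₀, G q⟫ + T (E₁ - E₀) A₀ q = 0)
    (hinit : ∀ q : W, ⟪E₀, G q⟫ + T E₀ A₀ q = 0) :
    (1/2) * ‖E₁‖ ^ 2 + (1/2) * ‖B₁‖ ^ 2 ≤ (1/2) * ‖E₀‖ ^ 2 + (1/2) * ‖B₀‖ ^ 2 :=
  constrained_implicit_euler_energy_dissipation_general G C β βsymm T Talt δt A₀ A₁ E₀ E₁ lam B₀ B₁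
    hB₀ hB₁ hevolA hevolE hconstr hinit
end
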